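/- Suppose ω : [0,∞) → ℝ is differentiable and satisfies both ω̇(t) + η₁(ω(t) + ω_l - ω_ref) ≥ 0 and -ω̇(t) + η₂(ω_h - ω(t) + ω_ref) ≥ 0 for all t, with η₁, η₂ > 0. If ω_ref - ω_l ≤ ω(0) ≤ ω_ref + ω_h, then ω_ref - ω_l ≤ ω(t) ≤ ω_ref + ω_h for all t ≥ 0. -/

import Mathlib

/-- Since `exp (η t) * f t` has derivative `exp (η t) * (f' t + η * f t) ≥ 0`, it is monotone. -/
theorem nonneg_of_hasDerivAt_of_deriv_add_mul_nonneg {f f' : ℝ → ℝ} {η : ℝ}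
    (hf : ∀ t, 0 ≤ t → HasDerivAt f (f' t) t)
    (hf' : ∀ t, 0 ≤ t → 0 ≤ f' t + η * f t) (h0 : 0 ≤ f 0) {t : ℝ} (ht : 0 ≤ t) :
    0 ≤ f t := by
  set g : ℝ → ℝ := fun s => Real.exp (η * s) * f s
  have hg : ∀ s, 0 ≤ s → HasDerivAt g (Real.exp (η * s) * (f' s + η * f s)) s := by
    intro s hs
    have hexp : HasDerivAt (fun s => Real.exp (η * s)) (Real.exp (η * s) * η) s := by
      simpa using ((hasDerivAt_id s).const_mul η).exp
    exact (hexp.mul (hf s hs)).congr_deriv (by ring)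
  have hmono : MonotoneOn g (Set.Ici 0) :=
    monotoneOn_of_hasDerivWithinAt_nonneg (convex_Ici 0)
      (fun s hs => (hg s hs).continuousAt.continuousWithinAt)
      (fun s hs => (hg s (interior_subset hs)).hasDerivWithinAt)
      (fun s hs => mul_nonneg (Real.exp_pos _).le (hf' s (interior_subset hs)))
  have hgt : 0 ≤ g t := by
    have hg0 : g 0 = f 0 := by simp [g]
    exact hg0 ▸ h0 |>.trans (hmono Set.self_mem_Ici ht ht)
  exact nonneg_of_mul_nonneg_right hgt (Real.exp_pos _)

theorem stmt_4_general (ω : ℝ → ℝ) (ω' : ℝ → ℝ)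
    (hω : ∀ t : ℝ, 0 ≤ t → HasDerivAt ω (ω' t) t)
    (η₁ η₂ ωl ωh ωref : ℝ)
    (hc1 : ∀ t : ℝ, 0 ≤ t → ω' t + η₁ * (ω t + ωl - ωref) ≥ 0)
    (hc2 : ∀ t : ℝ, 0 ≤ t → -ω' t + η₂ * (ωh - ω t + ωref) ≥ 0)
    (h0 : ωref - ωl ≤ ω 0 ∧ ω 0 ≤ ωref + ωh) :
    ∀ t : ℝ, 0 ≤ t → ωref - ωl ≤ ω t ∧ ω t ≤ ωref + ωh := by
  intro t ht
  have hlower : 0 ≤ ω t - (ωref - ωl) :=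
    nonneg_of_hasDerivAt_of_deriv_add_mul_nonneg (η := η₁)
      (fun s hs => (hω s hs).sub_const _)
      (fun s hs => by linarith [hc1 s hs]) (by linarith [h0.1]) ht
  have hupper : 0 ≤ ωref + ωh - ω t :=
    nonneg_of_hasDerivAt_of_deriv_add_mul_nonneg (η := η₂)
      (fun s hs => (hω s hs).const_sub _)
      (fun s hs => by linarith [hc2 s hs]) (by linarith [h0.2]) ht
  exact ⟨by linarith, by linarith⟩

theorem stmt_4 (ω : ℝ → ℝ) (ω' : ℝ → ℝ)
    (hω : ∀ t : ℝ, 0 ≤ t → HasDerivAt ω (ω' t) t)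
    (η₁ η₂ ωl ωh ωref : ℝ) (hη₁ : 0 < η₁) (hη₂ : 0 < η₂)
    (hωl : 0 < ωl) (hωh : 0 < ωh)
    (hc1 : ∀ t : ℝ, 0 ≤ t → ω' t + η₁ * (ω t + ωl - ωref) ≥ 0)
    (hc2 : ∀ t : ℝ, 0 ≤ t → -ω' t + η₂ * (ωh - ω t + ωref) ≥ 0)
    (h0 : ωref - ωl ≤ ω 0 ∧ ω 0 ≤ ωref + ωh) :
    ∀ t : ℝ, 0 ≤ t → ωref - ωl ≤ ω t ∧ ω t ≤ ωref + ωh :=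
  stmt_4_general ω ω' hω η₁ η₂ ωl ωh ωref hc1 hc2 h0
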